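/- Let n ≥ 1, let A : [0,∞) → ℝ^{n×n} be a continuous matrix-valued function and w : ℝⁿ × [0,∞) → ℝⁿ be continuous. Assume: (1) ∫₀^t μ₂[A(s)] ds → -∞ as t → ∞; (2) there exists T ≥ 0 such that μ₂[A(t)] < 0 for all t ≥ T; (3) there is a continuous function g : [0,∞) → [0,∞) with ‖w(x,t)‖₂ ≤ g(t) for all x ∈ ℝⁿ and t ≥ 0, and g(t)/μ₂[A(t)] → 0 as t → ∞. Then every solution x : [0,∞) → ℝⁿ of the perturbed system ẋ(t) = A(t)x(t) + w(x(t), t) satisfies ‖x(t)‖₂ → 0 as t → ∞. -/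

import Mathlib

/-!
Write `m(t) = μ₂[A(t)]`. Since `⟪y, A y⟫ ≤ μ₂[A] ‖y‖²` and `‖w‖ ≤ g`, the upper Dini derivative
of `‖x‖` is at most `m ‖x‖ + g`. Given `ε > 0`, from some time `a` on we have `m < 0` and
`g ≤ ε (-m)`. For `ε' > ε`, the function `B(t) = ε' + ‖x(a)‖ exp (∫ₐᵗ m)` solves
`B' = m (B - ε')`, which exceeds `m B + ε (-m)`; hence `B` dominates `‖x‖` on `[a, ∞)`, and the
exponential part of `B` tends to `0` because `∫₀ᵗ m → -∞`.
Differentiability of `∫ m` needs continuity of `μ₂`, which follows from its variational form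
`μ₂[A] = max_{‖v‖ = 1} ⟪v, A v⟫`.
-/

open Filter Matrix

lemma add_transpose_isHermitian {n : ℕ} (A : Matrix (Fin n) (Fin n) ℝ) :
    (A + Aᵀ).IsHermitian := by
  ext i j
  simp [Matrix.conjTranspose_apply, Matrix.transpose_apply, add_comm]

/-- The largest eigenvalue of a real symmetric matrix. -/
noncomputable def lambdaMax {n : ℕ} (M : Matrix (Fin n) (Fin n) ℝ) (hM : M.IsHermitian) : ℝ :=
  ⨆ i, hM.eigenvalues i

/-- The Euclidean logarithmic norm `μ₂[A] = (1/2)·λ_max(A + Aᵀ)`. -/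
noncomputable def mu2 {n : ℕ} (A : Matrix (Fin n) (Fin n) ℝ) : ℝ :=
  (1 / 2) * lambdaMax (A + Aᵀ) (add_transpose_isHermitian A)

open Set
open scoped RealInnerProductSpace Topology

section

variable {n : ℕ}

namespace Matrix

lemma IsHermitian.toEuclideanLin_eigenvectorBasis {M : Matrix (Fin n) (Fin n) ℝ}
    (hM : M.IsHermitian) (i : Fin n) :
    toEuclideanLin M (hM.eigenvectorBasis i) = hM.eigenvalues i • hM.eigenvectorBasis i := by
  ext1 j
  exact congrFun (hM.mulVec_eigenvectorBasis i) j

lemma IsHermitian.eigenvalues_le_lambdaMax {M : Matrix (Fin n) (Fin n) ℝ}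
    (hM : M.IsHermitian) (i : Fin n) : hM.eigenvalues i ≤ lambdaMax M hM :=
  le_ciSup (Finite.bddAbove_range _) i

lemma IsHermitian.inner_toEuclideanLin_le_lambdaMax {M : Matrix (Fin n) (Fin n) ℝ}
    (hM : M.IsHermitian) (x : EuclideanSpace ℝ (Fin n)) :
    ⟪x, toEuclideanLin M x⟫ ≤ lambdaMax M hM * ‖x‖ ^ 2 := by
  set b := hM.eigenvectorBasis
  have hsymm : (toEuclideanLin M).IsSymmetric := isSymmetric_toEuclideanLin_iff.mpr hM
  have hcoord (i : Fin n) : ⟪b i, toEuclideanLin M x⟫ = hM.eigenvalues i * ⟪b i, x⟫ := by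
    rw [← hsymm, hM.toEuclideanLin_eigenvectorBasis, real_inner_smul_left]
  calc ⟪x, toEuclideanLin M x⟫
      = ∑ i, hM.eigenvalues i * (⟪x, b i⟫ * ⟪b i, x⟫) := by
        rw [← b.sum_inner_mul_inner]
        refine Finset.sum_congr rfl fun i _ => ?_
        rw [hcoord]
        ring
    _ ≤ ∑ i, lambdaMax M hM * (⟪x, b i⟫ * ⟪b i, x⟫) := by
        refine Finset.sum_le_sum fun i _ => ?_
        rw [real_inner_comm x]
        exact mul_le_mul_of_nonneg_right (hM.eigenvalues_le_lambdaMax i) (mul_self_nonneg _)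
    _ = lambdaMax M hM * ‖x‖ ^ 2 := by
        rw [← Finset.mul_sum, b.sum_inner_mul_inner, real_inner_self_eq_norm_sq]

lemma IsHermitian.exists_norm_eq_one_inner_eq_lambdaMax [Nonempty (Fin n)]
    {M : Matrix (Fin n) (Fin n) ℝ} (hM : M.IsHermitian) :
    ∃ v : EuclideanSpace ℝ (Fin n), ‖v‖ = 1 ∧ ⟪v, toEuclideanLin M v⟫ = lambdaMax M hM := by
  obtain ⟨i, hi⟩ := Finite.exists_max hM.eigenvalues
  have hnorm : ‖hM.eigenvectorBasis i‖ = 1 := hM.eigenvectorBasis.orthonormal.1 i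
  refine ⟨hM.eigenvectorBasis i, hnorm, ?_⟩
  rw [hM.toEuclideanLin_eigenvectorBasis, real_inner_smul_right, real_inner_self_eq_norm_sq,
    hnorm, one_pow, mul_one]
  exact le_antisymm (hM.eigenvalues_le_lambdaMax i) (ciSup_le hi)

lemma inner_toEuclideanLin_add_transpose (A : Matrix (Fin n) (Fin n) ℝ)
    (y : EuclideanSpace ℝ (Fin n)) :
    ⟪y, toEuclideanLin (A + Aᵀ) y⟫ = 2 * ⟪y, toEuclideanLin A y⟫ := by
  rw [map_add, LinearMap.add_apply, inner_add_right, ← conjTranspose_eq_transpose_of_trivial,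
    toEuclideanLin_conjTranspose_eq_adjoint, LinearMap.adjoint_inner_right, real_inner_comm]
  ring

end Matrix

lemma inner_toEuclideanLin_le_mu2 (A : Matrix (Fin n) (Fin n) ℝ)
    (y : EuclideanSpace ℝ (Fin n)) :
    ⟪y, toEuclideanLin A y⟫ ≤ mu2 A * ‖y‖ ^ 2 := by
  have h := (add_transpose_isHermitian A).inner_toEuclideanLin_le_lambdaMax y
  rw [Matrix.inner_toEuclideanLin_add_transpose] at h
  rw [mu2]
  linarith

/-- `sSup ∅ = 0` matches `μ₂ = 0` in dimension zero. -/
lemma mu2_eq_sSup_inner (A : Matrix (Fin n) (Fin n) ℝ) :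
    mu2 A = sSup ((fun v => ⟪v, toEuclideanLin A v⟫) '' Metric.sphere 0 1) := by
  rcases isEmpty_or_nonempty (Fin n) with hn | hn
  · have : Metric.sphere (0 : EuclideanSpace ℝ (Fin n)) 1 = ∅ := by
      ext v
      simp [Subsingleton.elim v 0]
    simp [this, mu2, lambdaMax, Real.iSup_of_isEmpty]
  · refine (IsGreatest.csSup_eq ⟨?_, ?_⟩).symm
    · obtain ⟨v, hv, hmax⟩ := (add_transpose_isHermitian A).exists_norm_eq_one_inner_eq_lambdaMax
      refine ⟨v, mem_sphere_zero_iff_norm.mpr hv, ?_⟩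
      rw [Matrix.inner_toEuclideanLin_add_transpose] at hmax
      rw [mu2, ← hmax]
      ring
    · rintro _ ⟨v, hv, rfl⟩
      simpa [mem_sphere_zero_iff_norm.mp hv] using inner_toEuclideanLin_le_mu2 A v

lemma continuous_mu2 : Continuous (mu2 : Matrix (Fin n) (Fin n) ℝ → ℝ) := by
  simp_rw [funext mu2_eq_sSup_inner]
  refine (isCompact_sphere 0 1).continuous_sSup ?_
  simp only [Function.HasUncurry.uncurry, toEuclideanLin, toLpLin_apply]
  fun_prop

end

section NormComparison

variable {E : Type*} [NormedAddCommGroup E] [InnerProductSpace ℝ E]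

lemma HasDerivAt.norm {x : ℝ → E} {x' : E} {t : ℝ} (hx : HasDerivAt x x' t)
    (h0 : x t ≠ 0) : HasDerivAt (fun s => ‖x s‖) (⟪x t, x'⟫ / ‖x t‖) t := by
  have hsq : ‖x t‖ ^ 2 ≠ 0 := by positivity
  convert hx.norm_sq.sqrt hsq using 1
  · simp only [Real.sqrt_sq (norm_nonneg _)]
  · rw [Real.sqrt_sq (norm_nonneg _)]
    exact mul_div_mul_left _ _ two_ne_zero |>.symm

/-- `c` bounds the upper right Dini derivative of `‖x‖` at `t`; where `x t = 0` the norm need not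
be differentiable, and the slope of `‖x‖` is controlled by `‖x'‖` instead. -/
lemma HasDerivAt.frequently_slope_norm_lt {x : ℝ → E} {x' : E} {t c r : ℝ}
    (hx : HasDerivAt x x' t) (hinner : ⟪x t, x'⟫ ≤ c * ‖x t‖) (hzero : x t = 0 → ‖x'‖ ≤ c)
    (hr : c < r) : ∃ᶠ z in 𝓝[>] t, slope (fun s => ‖x s‖) t z < r := by
  by_cases h0 : x t = 0
  · simpa [slope_def_field, h0, div_eq_inv_mul] using
      hx.hasDerivWithinAt.liminf_right_slope_norm_le ((hzero h0).trans_lt hr)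
  · have hpos : 0 < ‖x t‖ := norm_pos_iff.mpr h0
    refine (hx.norm h0).hasDerivWithinAt.liminf_right_slope_le (lt_of_le_of_lt ?_ hr)
    rwa [div_le_iff₀ hpos]

theorem norm_le_add_mul_exp_of_inner_le {x : ℝ → E} {L : ℝ → E →ₗ[ℝ] E} {w : ℝ → E}
    {m M : ℝ → ℝ} {a ε ε' : ℝ}
    (hx : ∀ t ≥ a, HasDerivAt x (L t (x t) + w t) t)
    (hL : ∀ t ≥ a, ∀ y, ⟪y, L t y⟫ ≤ m t * ‖y‖ ^ 2)
    (hw : ∀ t ≥ a, ‖w t‖ ≤ ε * -m t)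
    (hm : ∀ t ≥ a, m t < 0)
    (hM : ∀ t ≥ a, HasDerivAt M (m t) t)
    (hε : ε < ε') :
    ∀ t ≥ a, ‖x t‖ ≤ ε' + ‖x a‖ * Real.exp (M t - M a) := by
  set B : ℝ → ℝ := fun s => ε' + ‖x a‖ * Real.exp (M s - M a)
  have hB (s : ℝ) (hs : s ≥ a) : HasDerivAt B (m s * (B s - ε')) s := by
    refine ((((hM s hs).sub_const (M a)).exp.const_mul ‖x a‖).const_add ε').congr_deriv ?_
    simp only [B]
    ring
  have hε'0 : 0 ≤ ε' := by
    nlinarith [(norm_nonneg _).trans (hw a le_rfl), hm a le_rfl]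
  intro t ht
  refine image_le_of_liminf_slope_right_lt_deriv_boundary'
    (f' := fun s => m s * ‖x s‖ + ε * -m s) (B' := fun s => m s * (B s - ε'))
    (fun s hs => (hx s hs.1).continuousAt.norm.continuousWithinAt) ?_ (by simpa [B] using hε'0)
    (fun s hs => (hB s hs.1).continuousAt.continuousWithinAt)
    (fun s hs => (hB s hs.1).hasDerivWithinAt) ?_ (right_mem_Icc.2 ht)
  · intro s hs r hr
    refine (hx s hs.1).frequently_slope_norm_lt ?_ (fun h0 => ?_) hr
    · calc ⟪x s, L s (x s) + w s⟫
          ≤ m s * ‖x s‖ ^ 2 + ‖x s‖ * ‖w s‖ := by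
            rw [inner_add_right]
            gcongr
            · exact hL s hs.1 (x s)
            · exact real_inner_le_norm _ _
        _ ≤ m s * ‖x s‖ ^ 2 + ‖x s‖ * (ε * -m s) := by gcongr; exact hw s hs.1
        _ = (m s * ‖x s‖ + ε * -m s) * ‖x s‖ := by ring
    · simpa [h0] using hw s hs.1
  · intro s hs heq
    simp only [heq]
    nlinarith [hm s hs.1]

end NormComparison

lemma eventually_le_mul_neg_of_tendsto_div {α : Type*} {l : Filter α} {g m : α → ℝ}
    (hgm : Tendsto (fun t => g t / m t) l (𝓝 0)) (hm : ∀ᶠ t in l, m t < 0) {ε : ℝ}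
    (hε : 0 < ε) : ∀ᶠ t in l, g t ≤ ε * -m t := by
  filter_upwards [hm, hgm.eventually (lt_mem_nhds (neg_lt_zero.2 hε))] with t hmt ht
  rw [lt_div_iff_of_neg hmt] at ht
  linarith

lemma hasDerivAt_integral_of_continuousOn_Ici {f : ℝ → ℝ} {c t : ℝ}
    (hf : ContinuousOn f (Ici c)) (ht : c < t) :
    HasDerivAt (fun u => ∫ s in c..u, f s) (f t) t :=
  intervalIntegral.integral_hasDerivAt_right
    ((hf.mono fun _ hs => (uIcc_of_le ht.le ▸ hs).1).intervalIntegrable)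
    (ContinuousAt.stronglyMeasurableAtFilter isOpen_Ioi
      (fun _ hs => hf.continuousAt (Ici_mem_nhds hs)) t ht)
    (hf.continuousAt (Ici_mem_nhds ht))

theorem stmt_1_general (n : ℕ)
    (A : ℝ → Matrix (Fin n) (Fin n) ℝ)
    (hA : ContinuousOn A (Set.Ici (0 : ℝ)))
    (w : EuclideanSpace ℝ (Fin n) → ℝ → EuclideanSpace ℝ (Fin n))
    (hμ : Tendsto (fun t : ℝ => ∫ s in (0:ℝ)..t, mu2 (A s)) atTop atBot)
    (hneg : ∃ T : ℝ, 0 ≤ T ∧ ∀ t : ℝ, T ≤ t → mu2 (A t) < 0)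
    (g : ℝ → ℝ)
    (hbound : ∀ (y : EuclideanSpace ℝ (Fin n)) (t : ℝ), 0 ≤ t → ‖w y t‖ ≤ g t)
    (hratio : Tendsto (fun t : ℝ => g t / mu2 (A t)) atTop (nhds 0))
    (x : ℝ → EuclideanSpace ℝ (Fin n))
    (hx : ∀ t : ℝ, 0 ≤ t →
      HasDerivAt x (Matrix.toEuclideanLin (A t) (x t) + w (x t) t) t) :
    Tendsto (fun t : ℝ => ‖x t‖) atTop (nhds 0) := by
  set M : ℝ → ℝ := fun t => ∫ s in (0:ℝ)..t, mu2 (A s)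
  obtain ⟨T, -, hT⟩ := hneg
  have hm : ∀ᶠ t in atTop, mu2 (A t) < 0 := eventually_atTop.2 ⟨T, hT⟩
  rw [NormedAddGroup.tendsto_nhds_zero]
  intro ε hε
  obtain ⟨a, ha⟩ := eventually_atTop.1 <| (eventually_gt_atTop 0).and <|
    hm.and (eventually_le_mul_neg_of_tendsto_div hratio hm (by positivity : 0 < ε / 4))
  have hcomparison : ∀ t ≥ a, ‖x t‖ ≤ ε / 2 + ‖x a‖ * Real.exp (M t - M a) :=
    norm_le_add_mul_exp_of_inner_le (L := fun t => Matrix.toEuclideanLin (A t))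
      (fun t ht => hx t (ha t ht).1.le) (fun t _ => inner_toEuclideanLin_le_mu2 (A t))
      (fun t ht => (hbound _ t (ha t ht).1.le).trans (ha t ht).2.2) (fun t ht => (ha t ht).2.1)
      (fun t ht => hasDerivAt_integral_of_continuousOn_Ici
        (continuous_mu2.comp_continuousOn hA) (ha t ht).1)
      (by linarith)
  have hdecay : Tendsto (fun t => ‖x a‖ * Real.exp (M t - M a)) atTop (𝓝 0) := by
    have hexp := Real.tendsto_exp_atBot.comp (tendsto_atBot_add_const_right _ (-M a) hμ)
    simpa [← sub_eq_add_neg] using hexp.const_mul ‖x a‖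
  filter_upwards [eventually_ge_atTop a, hdecay.eventually (gt_mem_nhds (half_pos hε))]
    with t hta ht
  rw [norm_norm]
  linarith [hcomparison t hta]

/-- robustness of global attractivity of the origin of an LTV system
under perturbations `w(x,t)` dominated by `g(t)` with `g(t)/μ₂[A(t)] → 0`. -/
theorem stmt_1 (n : ℕ) (hn : 1 ≤ n)
    (A : ℝ → Matrix (Fin n) (Fin n) ℝ)
    (hA : ContinuousOn A (Set.Ici (0 : ℝ)))
    (w : EuclideanSpace ℝ (Fin n) → ℝ → EuclideanSpace ℝ (Fin n))
    (hw : ContinuousOn (fun p : EuclideanSpace ℝ (Fin n) × ℝ => w p.1 p.2)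
      (Set.univ ×ˢ Set.Ici (0 : ℝ)))
    (hμ : Tendsto (fun t : ℝ => ∫ s in (0:ℝ)..t, mu2 (A s)) atTop atBot)
    (hneg : ∃ T : ℝ, 0 ≤ T ∧ ∀ t : ℝ, T ≤ t → mu2 (A t) < 0)
    (g : ℝ → ℝ)
    (hg : ContinuousOn g (Set.Ici (0 : ℝ)))
    (hg0 : ∀ t : ℝ, 0 ≤ t → 0 ≤ g t)
    (hbound : ∀ (y : EuclideanSpace ℝ (Fin n)) (t : ℝ), 0 ≤ t → ‖w y t‖ ≤ g t)
    (hratio : Tendsto (fun t : ℝ => g t / mu2 (A t)) atTop (nhds 0))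
    (x : ℝ → EuclideanSpace ℝ (Fin n))
    (hx : ∀ t : ℝ, 0 ≤ t →
      HasDerivAt x (Matrix.toEuclideanLin (A t) (x t) + w (x t) t) t) :
    Tendsto (fun t : ℝ => ‖x t‖) atTop (nhds 0) :=
  stmt_1_general n A hA w hμ hneg g hbound hratio x hx
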